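/- arXiv:2306.08777 — 4 statements merged into one kernel-verified Lean document; each statement's English description precedes it below -/
import Mathlib

section
/- Fix a sample z = (z_1,…,z_{n+m}) with n ≤ m, let k be a symmetric measurable kernel and h(x,x';y,y') = k(x,x') + k(y,y') − k(x,y') − k(x',y), and let Ū(z) := (1/(n(n−1)m(m−1))) sup_{σ∈S_{n+m}} [ Σ_{(i,i')∈[n]_2} ( Σ_{(j,j')∈[m]_2} h(z_{σ(i)}, z_{σ(i')}; z_{σ(n+j)}, z_{σ(n+j')}) )² ]^{1/2}. Then Ū(z)² ≤ (16/(n(n−1))) N̂(z), where N̂(z) := (1/(n(n−1))) Σ_{(i,j)∈[n+m]_2} k(z_i, z_j)². Moreover, if 0 ≤ k(x,x') ≤ κ for all x, x', then Ū(z)² ≤ 4κ²/(n(n−1)). -/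
open MeasureTheory
open scoped ENNReal NNReal BigOperators RealInnerProductSpace Classical

noncomputable section

/-- Empirical quantile of the finite family `f` at level `q`:
`inf { r : ℝ | (1/|A|) ∑_{a∈A} 1{f a ≤ r} ≥ q }`. -/
def empQuantile {ι : Type*} [Fintype ι] (q : ℝ) (f : ι → ℝ) : ℝ :=
  sInf {r : ℝ | q ≤ (Finset.univ.filter fun a => f a ≤ r).card / (Fintype.card ι : ℝ)}

/-- Unbiased estimator of the squared MMD. -/
def mmdSqHat {X : Type*} (k : X → X → ℝ) {n m : ℕ} (x : Fin n → X) (y : Fin m → X) : ℝ :=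
  (1 / ((n : ℝ) * ((n : ℝ) - 1))) * ∑ i : Fin n, ∑ i' : Fin n,
      (if i ≠ i' then k (x i) (x i') else 0)
    + (1 / ((m : ℝ) * ((m : ℝ) - 1))) * ∑ j : Fin m, ∑ j' : Fin m,
      (if j ≠ j' then k (y j) (y j') else 0)
    - (2 / ((m : ℝ) * (n : ℝ))) * ∑ i : Fin n, ∑ j : Fin m, k (x i) (y j)

/-- Population squared MMD:
`∫∫ k dp dp + ∫∫ k dq dq − 2 ∫∫ k dp dq`. -/
def mmdSq {X : Type*} [MeasurableSpace X] (k : X → X → ℝ) (p q : Measure X) : ℝ :=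
  (∫ x, ∫ x', k x x' ∂p ∂p) + (∫ y, ∫ y', k y y' ∂q ∂q) - 2 * (∫ x, ∫ y, k x y ∂q ∂p)

/-- First `n` entries of a combined sample. -/
def xPart {X : Type*} (n m : ℕ) (z : Fin (n + m) → X) : Fin n → X := fun i => z (Fin.castAdd m i)

/-- Last `m` entries of a combined sample. -/
def yPart {X : Type*} (n m : ℕ) (z : Fin (n + m) → X) : Fin m → X := fun j => z (Fin.natAdd n j)

/-- The normaliser `N̂_k(z) = (1/(n(n−1))) ∑_{i≠j} k(z_i,z_j)²`. -/
def normHat {X : Type*} (k : X → X → ℝ) (n : ℕ) {N : ℕ} (z : Fin N → X) : ℝ :=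
  (1 / ((n : ℝ) * ((n : ℝ) - 1))) * ∑ i : Fin N, ∑ j : Fin N,
    (if i ≠ j then (k (z i) (z j)) ^ 2 else 0)

/-- The MMD-FUSE-1 statistic. -/
def fuse1Stat {X Θ : Type*} [MeasurableSpace Θ] (k : Θ → X → X → ℝ) (π : Measure Θ)
    (lam : ℝ) (n m : ℕ) (z : Fin (n + m) → X) : ℝ :=
  (1 / lam) * Real.log (∫ θ, Real.exp (lam * mmdSqHat (k θ) (xPart n m z) (yPart n m z)) ∂π)

/-- The MMD-FUSE-N statistic. -/
def fuseNStat {X Θ : Type*} [MeasurableSpace Θ] (k : Θ → X → X → ℝ) (π : Measure Θ)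
    (lam : ℝ) (n m : ℕ) (z : Fin (n + m) → X) : ℝ :=
  (1 / lam) * Real.log (∫ θ,
    Real.exp (lam * mmdSqHat (k θ) (xPart n m z) (yPart n m z) / Real.sqrt (normHat (k θ) n z)) ∂π)

/-- The uniform distribution on a finite nonempty type. -/
def uniformOn (G : Type*) [Fintype G] [Nonempty G] [MeasurableSpace G] : Measure G :=
  (PMF.uniformOfFintype G).toMeasure

instance uniformOn.instIsProbabilityMeasure (G : Type*) [Fintype G] [Nonempty G]
    [MeasurableSpace G] : IsProbabilityMeasure (uniformOn G) := by
  unfold uniformOn; infer_instance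

instance (N : ℕ) : MeasurableSpace (Equiv.Perm (Fin N)) := ⊤

/-- Real-valued KL divergence `∫ log(dρ/dπ) dρ` (meaningful when `ρ ≪ π` and the
integrand is `ρ`-integrable). -/
def klReal {Θ : Type*} [MeasurableSpace Θ] (ρ π : Measure Θ) : ℝ :=
  ∫ θ, Real.log ((ρ.rnDeriv π θ).toReal) ∂ρ

/-- The population FUSE-1 quantity `sup_ρ { MMD²(p,q;K_ρ) − KL(ρ‖π)/λ }`, the supremum
running over probability measures `ρ` with finite KL divergence to `π` (measures with
infinite KL contribute `−∞` and hence never enlarge the supremum). -/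
def fuse1Pop {X Θ : Type*} [MeasurableSpace X] [MeasurableSpace Θ]
    (k : Θ → X → X → ℝ) (π : Measure Θ) (lam : ℝ) (p q : Measure X) : ℝ :=
  sSup {x : ℝ | ∃ ρ : Measure Θ, IsProbabilityMeasure ρ ∧ ρ ≪ π ∧
    Integrable (fun θ => Real.log ((ρ.rnDeriv π θ).toReal)) ρ ∧
    x = mmdSq (fun a b => ∫ θ, k θ a b ∂ρ) p q - klReal ρ π / lam}

/-- Support of a measure on a topological measurable space: points all of whose open
neighbourhoods have positive measure. -/
def msupport {Θ : Type*} [TopologicalSpace Θ] [MeasurableSpace Θ] (π : Measure Θ) : Set Θ :=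
  {θ | ∀ U : Set Θ, IsOpen U → θ ∈ U → 0 < π U}

/-- The MMD two-sample U-statistic kernel. -/
def hker {X : Type*} (k : X → X → ℝ) (x x' y y' : X) : ℝ :=
  k x x' + k y y' - k x y' - k x' y

/-- The two-sample U-statistic `U(z)`. -/
def uStat {X : Type*} (k : X → X → ℝ) (n m : ℕ) (z : Fin (n + m) → X) : ℝ :=
  (1 / ((n : ℝ) * ((n : ℝ) - 1) * (m : ℝ) * ((m : ℝ) - 1))) *
    ∑ i : Fin n, ∑ i' : Fin n, ∑ j : Fin m, ∑ j' : Fin m,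
      if i ≠ i' ∧ j ≠ j' then
        hker k (z (Fin.castAdd m i)) (z (Fin.castAdd m i'))
          (z (Fin.natAdd n j)) (z (Fin.natAdd n j'))
      else 0

/-- The quantity `Ū(z)`. -/
def uBar {X : Type*} (k : X → X → ℝ) (n m : ℕ) (z : Fin (n + m) → X) : ℝ :=
  (1 / ((n : ℝ) * ((n : ℝ) - 1) * (m : ℝ) * ((m : ℝ) - 1))) *
    ⨆ σ : Equiv.Perm (Fin (n + m)),
      Real.sqrt (∑ i : Fin n, ∑ i' : Fin n,
        if i ≠ i' then
          (∑ j : Fin m, ∑ j' : Fin m,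
            if j ≠ j' then
              hker k (z (σ (Fin.castAdd m i))) (z (σ (Fin.castAdd m i')))
                (z (σ (Fin.natAdd n j))) (z (σ (Fin.natAdd n j')))
            else 0) ^ 2
        else 0)

/-- Frobenius norm of a real square matrix. -/
def matFrobNorm {n : ℕ} (A : Matrix (Fin n) (Fin n) ℝ) : ℝ :=
  Real.sqrt (∑ i, ∑ j, (A i j) ^ 2)

/-- ℓ²→ℓ² operator norm (largest singular value) of a real square matrix. -/
def matOpNorm {n : ℕ} (A : Matrix (Fin n) (Fin n) ℝ) : ℝ :=
  ‖LinearMap.toContinuousLinearMap (Matrix.toEuclideanLin A)‖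

end

section NormaliserHelpers

private lemma sum_if_ne_eq {ι : Type*} [Fintype ι] [DecidableEq ι] (f : ι → ι → ℝ) :
    ∑ i : ι, ∑ j : ι, (if i ≠ j then f i j else 0)
      = ∑ p ∈ (Finset.univ : Finset ι).offDiag, f p.1 p.2 := by
  rw [show (Finset.univ : Finset ι).offDiag
      = ((Finset.univ : Finset ι) ×ˢ (Finset.univ : Finset ι)).filter (fun a => a.1 ≠ a.2) by
        ext; simp, Finset.sum_filter, Finset.sum_product]

private lemma sum_if_ne_left {ι : Type*} [Fintype ι] [DecidableEq ι] (G : ι → ℝ) :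
    ∑ i : ι, ∑ j : ι, (if i ≠ j then G i else 0)
      = ((Fintype.card ι : ℝ) - 1) * ∑ i : ι, G i := by
  have h1 : ∀ i : ι, ∑ j : ι, (if i ≠ j then G i else 0)
      = (Fintype.card ι : ℝ) * G i - G i := by
    intro i
    have h2 : ∀ j : ι, (if i ≠ j then G i else 0) = G i - (if i = j then G i else 0) := by
      intro j; by_cases h : i = j <;> simp [h]
    simp_rw [h2, Finset.sum_sub_distrib, Finset.sum_ite_eq, Finset.sum_const,
      Finset.mem_univ, if_true, Finset.card_univ, nsmul_eq_mul]
  simp_rw [h1, Finset.sum_sub_distrib, ← Finset.mul_sum]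
  ring

private lemma sum_if_ne_right {ι : Type*} [Fintype ι] [DecidableEq ι] (F : ι → ℝ) :
    ∑ i : ι, ∑ j : ι, (if i ≠ j then F j else 0)
      = ((Fintype.card ι : ℝ) - 1) * ∑ j : ι, F j := by
  have h1 : ∀ i : ι, ∑ j : ι, (if i ≠ j then F j else 0)
      = (∑ j : ι, F j) - F i := by
    intro i
    have h2 : ∀ j : ι, (if i ≠ j then F j else 0) = F j - (if i = j then F j else 0) := by
      intro j; by_cases h : i = j <;> simp [h]
    simp_rw [h2, Finset.sum_sub_distrib, Finset.sum_ite_eq, Finset.mem_univ, if_true]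
  simp_rw [h1, Finset.sum_sub_distrib, Finset.sum_const, Finset.card_univ, nsmul_eq_mul]
  ring

private lemma sum_offDiag_fst {ι : Type*} [Fintype ι] [DecidableEq ι] (G : ι → ℝ) :
    ∑ p ∈ (Finset.univ : Finset ι).offDiag, G p.1
      = ((Fintype.card ι : ℝ) - 1) * ∑ i : ι, G i := by
  rw [← sum_if_ne_eq fun i _ => G i]; exact sum_if_ne_left G

private lemma sum_offDiag_snd {ι : Type*} [Fintype ι] [DecidableEq ι] (F : ι → ℝ) :
    ∑ p ∈ (Finset.univ : Finset ι).offDiag, F p.2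
      = ((Fintype.card ι : ℝ) - 1) * ∑ j : ι, F j := by
  rw [← sum_if_ne_eq fun _ j => F j]; exact sum_if_ne_right F

private lemma offDiag_card_real {ι : Type*} [Fintype ι] [DecidableEq ι] :
    (((Finset.univ : Finset ι).offDiag.card : ℝ))
      = (Fintype.card ι : ℝ) * ((Fintype.card ι : ℝ) - 1) := by
  rw [Finset.offDiag_card, Finset.card_univ]
  have hle : Fintype.card ι ≤ Fintype.card ι * Fintype.card ι := by
    rcases Nat.eq_zero_or_pos (Fintype.card ι) with h | h
    · simp [h]
    · exact Nat.le_mul_of_pos_left _ h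
  rw [Nat.cast_sub hle]
  push_cast; ring

private lemma sq_double_if_sum_le {ι : Type*} [Fintype ι] [DecidableEq ι] (f : ι → ι → ℝ) :
    (∑ i : ι, ∑ j : ι, (if i ≠ j then f i j else 0)) ^ 2
      ≤ ((Fintype.card ι : ℝ) * ((Fintype.card ι : ℝ) - 1)) *
        ∑ i : ι, ∑ j : ι, (if i ≠ j then (f i j) ^ 2 else 0) := by
  rw [sum_if_ne_eq, sum_if_ne_eq]
  have h := sq_sum_le_card_mul_sum_sq (s := (Finset.univ : Finset ι).offDiag)
      (f := fun p : ι × ι => f p.1 p.2)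
  rwa [offDiag_card_real] at h

private lemma sum_comp_le {α β : Type*} [DecidableEq β] (s : Finset α) (t : Finset β)
    (φ : α → β) (hφ : Set.InjOn φ s) (hsub : ∀ a ∈ s, φ a ∈ t)
    (g : β → ℝ) (hg : ∀ b ∈ t, 0 ≤ g b) :
    ∑ a ∈ s, g (φ a) ≤ ∑ b ∈ t, g b := by
  rw [← Finset.sum_image (fun x hx y hy h => hφ hx hy h)]
  exact Finset.sum_le_sum_of_subset_of_nonneg (Finset.image_subset_iff.mpr hsub)
    (fun b hb _ => hg b hb)

end NormaliserHelpers

set_option maxHeartbeats 1600000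

/-- Normaliser bound.
For a fixed sample `z` of size `n + m` with `n ≤ m` and a symmetric measurable kernel,
`Ū(z)² ≤ (16/(n(n−1))) N̂(z)`; moreover if `0 ≤ k ≤ κ` then `Ū(z)² ≤ 4κ²/(n(n−1))`. -/
theorem uBar_normaliser_bound
    (X : Type) [MeasurableSpace X]
    (n m : ℕ) (hnm : n ≤ m)
    (k : X → X → ℝ)
    (hmeas : Measurable fun t : X × X => k t.1 t.2)
    (hsymm : ∀ x y, k x y = k y x)
    (z : Fin (n + m) → X) :
    (uBar k n m z) ^ 2 ≤ 16 / ((n : ℝ) * ((n : ℝ) - 1)) * normHat k n z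
      ∧ ∀ κ : ℝ, (∀ x y, k x y ∈ Set.Icc (0 : ℝ) κ) →
          (uBar k n m z) ^ 2 ≤ 4 * κ ^ 2 / ((n : ℝ) * ((n : ℝ) - 1)) := by
  classical
  have hnn0 : (0:ℝ) ≤ (n:ℝ) * ((n:ℝ) - 1) := by
    rcases Nat.eq_zero_or_pos n with h | h
    · simp [h]
    · have h1 : (1:ℝ) ≤ (n:ℝ) := by exact_mod_cast h
      nlinarith
  have hnorm0 : 0 ≤ normHat k n z := by
    unfold normHat
    refine mul_nonneg (one_div_nonneg.mpr hnn0) ?_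
    refine Finset.sum_nonneg fun i _ => Finset.sum_nonneg fun j _ => ?_
    split <;> positivity
  by_cases hdeg : (n:ℝ) * ((n:ℝ) - 1) * (m:ℝ) * ((m:ℝ) - 1) = 0
  · have hu : uBar k n m z = 0 := by
      unfold uBar; rw [hdeg]; simp
    rw [hu]
    constructor
    · norm_num
      exact mul_nonneg (div_nonneg (by norm_num) hnn0) hnorm0
    · intro κ hκ
      norm_num
      exact div_nonneg (by positivity) hnn0
  -- main case
  have hn2 : 2 ≤ n := by
    by_contra h
    push_neg at h
    interval_cases n <;> norm_num at hdeg
  have hm2 : 2 ≤ m := le_trans hn2 hnm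
  have hn2R : (2:ℝ) ≤ (n:ℝ) := by exact_mod_cast hn2
  have hm2R : (2:ℝ) ≤ (m:ℝ) := by exact_mod_cast hm2
  have hnmR : (n:ℝ) ≤ (m:ℝ) := by exact_mod_cast hnm
  have hnnpos : (0:ℝ) < (n:ℝ) * ((n:ℝ) - 1) := by nlinarith
  have hmmpos : (0:ℝ) < (m:ℝ) * ((m:ℝ) - 1) := by nlinarith
  have hprodpos : (0:ℝ) < (n:ℝ) * ((n:ℝ) - 1) * (m:ℝ) * ((m:ℝ) - 1) := by nlinarith
  set T : ℝ := ∑ p ∈ (Finset.univ : Finset (Fin (n+m))).offDiag, (k (z p.1) (z p.2))^2 with hTdef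
  have hT0 : 0 ≤ T := Finset.sum_nonneg fun p _ => sq_nonneg _
  have hTt : ∀ w ∈ (Finset.univ : Finset (Fin (n+m))).offDiag,
      (0:ℝ) ≤ (fun w : Fin (n+m) × Fin (n+m) => (k (z w.1) (z w.2))^2) w :=
    fun w _ => sq_nonneg _
  -- injectivity facts
  have hcast_inj : ∀ σ : Equiv.Perm (Fin (n+m)), Function.Injective
      (fun i : Fin n => σ (Fin.castAdd m i)) := by
    intro σ a b h
    have h2 := σ.injective h
    have : (Fin.castAdd m a : Fin (n+m)).val = (Fin.castAdd m b).val := by rw [h2]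
    simp only [Fin.coe_castAdd] at this
    exact Fin.ext this
  have hnat_inj : ∀ σ : Equiv.Perm (Fin (n+m)), Function.Injective
      (fun j : Fin m => σ (Fin.natAdd n j)) := by
    intro σ a b h
    have h2 := σ.injective h
    have : (Fin.natAdd n a : Fin (n+m)).val = (Fin.natAdd n b).val := by rw [h2]
    simp only [Fin.coe_natAdd] at this
    exact Fin.ext (by omega)
  have hcn_ne : ∀ (σ : Equiv.Perm (Fin (n+m))) (i : Fin n) (j : Fin m),
      σ (Fin.castAdd m i) ≠ σ (Fin.natAdd n j) := by
    intro σ i j h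
    have h2 := σ.injective h
    have h3 : (Fin.castAdd m i : Fin (n+m)).val = (Fin.natAdd n j).val := by rw [h2]
    simp only [Fin.coe_castAdd, Fin.coe_natAdd] at h3
    have := i.isLt
    omega
  -- the four basic pair-sum bounds, for any permutation σ
  have hXX : ∀ σ : Equiv.Perm (Fin (n+m)),
      ∑ p ∈ (Finset.univ : Finset (Fin n)).offDiag,
        (k (z (σ (Fin.castAdd m p.1))) (z (σ (Fin.castAdd m p.2))))^2 ≤ T := by
    intro σ
    refine sum_comp_le _ _
      (fun p : Fin n × Fin n => (σ (Fin.castAdd m p.1), σ (Fin.castAdd m p.2)))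
      ?_ ?_ (fun w => (k (z w.1) (z w.2))^2) hTt
    · intro a _ b _ h
      have h1 : σ (Fin.castAdd m a.1) = σ (Fin.castAdd m b.1) := congrArg Prod.fst h
      have h2 : σ (Fin.castAdd m a.2) = σ (Fin.castAdd m b.2) := congrArg Prod.snd h
      exact Prod.ext (hcast_inj σ h1) (hcast_inj σ h2)
    · intro a ha
      rw [Finset.mem_offDiag] at ha ⊢
      exact ⟨Finset.mem_univ _, Finset.mem_univ _, fun h => ha.2.2 (hcast_inj σ h)⟩
  have hYY : ∀ σ : Equiv.Perm (Fin (n+m)),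
      ∑ q ∈ (Finset.univ : Finset (Fin m)).offDiag,
        (k (z (σ (Fin.natAdd n q.1))) (z (σ (Fin.natAdd n q.2))))^2 ≤ T := by
    intro σ
    refine sum_comp_le _ _
      (fun q : Fin m × Fin m => (σ (Fin.natAdd n q.1), σ (Fin.natAdd n q.2)))
      ?_ ?_ (fun w => (k (z w.1) (z w.2))^2) hTt
    · intro a _ b _ h
      have h1 : σ (Fin.natAdd n a.1) = σ (Fin.natAdd n b.1) := congrArg Prod.fst h
      have h2 : σ (Fin.natAdd n a.2) = σ (Fin.natAdd n b.2) := congrArg Prod.snd h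
      exact Prod.ext (hnat_inj σ h1) (hnat_inj σ h2)
    · intro a ha
      rw [Finset.mem_offDiag] at ha ⊢
      exact ⟨Finset.mem_univ _, Finset.mem_univ _, fun h => ha.2.2 (hnat_inj σ h)⟩
  have hXY : ∀ σ : Equiv.Perm (Fin (n+m)),
      ∑ i : Fin n, ∑ j : Fin m,
        (k (z (σ (Fin.castAdd m i))) (z (σ (Fin.natAdd n j))))^2 ≤ T := by
    intro σ
    rw [← Finset.sum_product']
    refine sum_comp_le _ _
      (fun p : Fin n × Fin m => (σ (Fin.castAdd m p.1), σ (Fin.natAdd n p.2)))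
      ?_ ?_ (fun w => (k (z w.1) (z w.2))^2) hTt
    · intro a _ b _ h
      have h1 : σ (Fin.castAdd m a.1) = σ (Fin.castAdd m b.1) := congrArg Prod.fst h
      have h2 : σ (Fin.natAdd n a.2) = σ (Fin.natAdd n b.2) := congrArg Prod.snd h
      exact Prod.ext (hcast_inj σ h1) (hnat_inj σ h2)
    · intro a _
      rw [Finset.mem_offDiag]
      exact ⟨Finset.mem_univ _, Finset.mem_univ _, hcn_ne σ a.1 a.2⟩
  have hYX : ∀ σ : Equiv.Perm (Fin (n+m)),
      ∑ i : Fin n, ∑ j : Fin m,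
        (k (z (σ (Fin.natAdd n j))) (z (σ (Fin.castAdd m i))))^2 ≤ T := by
    intro σ
    rw [← Finset.sum_product']
    refine sum_comp_le _ _
      (fun p : Fin n × Fin m => (σ (Fin.natAdd n p.2), σ (Fin.castAdd m p.1)))
      ?_ ?_ (fun w => (k (z w.1) (z w.2))^2) hTt
    · intro a _ b _ h
      have h1 : σ (Fin.natAdd n a.2) = σ (Fin.natAdd n b.2) := congrArg Prod.fst h
      have h2 : σ (Fin.castAdd m a.1) = σ (Fin.castAdd m b.1) := congrArg Prod.snd h
      exact Prod.ext (hcast_inj σ h2) (hnat_inj σ h1)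
    · intro a _
      rw [Finset.mem_offDiag]
      exact ⟨Finset.mem_univ _, Finset.mem_univ _, fun h => hcn_ne σ a.1 a.2 h.symm⟩
  -- Cauchy–Schwarz for the inner sum
  have hCS : ∀ (σ : Equiv.Perm (Fin (n+m))) (i i' : Fin n),
      (∑ j : Fin m, ∑ j' : Fin m,
          if j ≠ j' then
            hker k (z (σ (Fin.castAdd m i))) (z (σ (Fin.castAdd m i')))
              (z (σ (Fin.natAdd n j))) (z (σ (Fin.natAdd n j'))) else 0) ^ 2
      ≤ ((m:ℝ) * ((m:ℝ) - 1)) *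
        ∑ j : Fin m, ∑ j' : Fin m,
          (if j ≠ j' then
            (hker k (z (σ (Fin.castAdd m i))) (z (σ (Fin.castAdd m i')))
              (z (σ (Fin.natAdd n j))) (z (σ (Fin.natAdd n j'))))^2 else 0) := by
    intro σ i i'
    have h := sq_double_if_sum_le (fun j j' : Fin m =>
      hker k (z (σ (Fin.castAdd m i))) (z (σ (Fin.castAdd m i')))
        (z (σ (Fin.natAdd n j))) (z (σ (Fin.natAdd n j'))))
    simpa [Fintype.card_fin] using h
  -- pointwise bound on hker squared
  have hpt : ∀ a b c d : X,
      (hker k a b c d)^2 ≤ 4*((k a b)^2 + (k c d)^2 + (k a d)^2 + (k b c)^2) := by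
    intro a b c d
    simp only [hker]
    nlinarith [sq_nonneg (k a b - k c d), sq_nonneg (k a b + k c d),
      sq_nonneg (k a d - k b c), sq_nonneg (k a d + k b c),
      sq_nonneg (k a b + k c d - k a d - k b c), sq_nonneg (k a b + k c d + k a d + k b c)]
  -- master bound on the double off-diagonal sum of hker²
  have hmaster : ∀ σ : Equiv.Perm (Fin (n+m)),
      ∑ p ∈ (Finset.univ : Finset (Fin n)).offDiag,
        ∑ q ∈ (Finset.univ : Finset (Fin m)).offDiag,
          (hker k (z (σ (Fin.castAdd m p.1))) (z (σ (Fin.castAdd m p.2)))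
            (z (σ (Fin.natAdd n q.1))) (z (σ (Fin.natAdd n q.2))))^2
      ≤ 16 * ((m:ℝ) * ((m:ℝ) - 1)) * T := by
    intro σ
    have hcard_n : (((Finset.univ : Finset (Fin n)).offDiag.card : ℝ))
        = (n:ℝ) * ((n:ℝ) - 1) := by
      rw [offDiag_card_real]; simp [Fintype.card_fin]
    have hcard_m : (((Finset.univ : Finset (Fin m)).offDiag.card : ℝ))
        = (m:ℝ) * ((m:ℝ) - 1) := by
      rw [offDiag_card_real]; simp [Fintype.card_fin]
    have hS1 : ∑ p ∈ (Finset.univ : Finset (Fin n)).offDiag,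
        ∑ q ∈ (Finset.univ : Finset (Fin m)).offDiag,
          (k (z (σ (Fin.castAdd m p.1))) (z (σ (Fin.castAdd m p.2))))^2
        ≤ ((m:ℝ) * ((m:ℝ) - 1)) * T := by
      have : ∀ p ∈ (Finset.univ : Finset (Fin n)).offDiag,
          ∑ _q ∈ (Finset.univ : Finset (Fin m)).offDiag,
            (k (z (σ (Fin.castAdd m p.1))) (z (σ (Fin.castAdd m p.2))))^2
          = ((m:ℝ) * ((m:ℝ) - 1)) *
            (k (z (σ (Fin.castAdd m p.1))) (z (σ (Fin.castAdd m p.2))))^2 := by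
        intro p _
        rw [Finset.sum_const, nsmul_eq_mul, hcard_m]
      rw [Finset.sum_congr rfl this, ← Finset.mul_sum]
      exact mul_le_mul_of_nonneg_left (hXX σ) hmmpos.le
    have hS2 : ∑ p ∈ (Finset.univ : Finset (Fin n)).offDiag,
        ∑ q ∈ (Finset.univ : Finset (Fin m)).offDiag,
          (k (z (σ (Fin.natAdd n q.1))) (z (σ (Fin.natAdd n q.2))))^2
        ≤ ((m:ℝ) * ((m:ℝ) - 1)) * T := by
      rw [Finset.sum_const, nsmul_eq_mul, hcard_n]
      calc ((n:ℝ) * ((n:ℝ) - 1)) * ∑ q ∈ (Finset.univ : Finset (Fin m)).offDiag,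
            (k (z (σ (Fin.natAdd n q.1))) (z (σ (Fin.natAdd n q.2))))^2
          ≤ ((n:ℝ) * ((n:ℝ) - 1)) * T := mul_le_mul_of_nonneg_left (hYY σ) hnnpos.le
        _ ≤ ((m:ℝ) * ((m:ℝ) - 1)) * T := by
            have hle : (n:ℝ) * ((n:ℝ) - 1) ≤ (m:ℝ) * ((m:ℝ) - 1) := by nlinarith
            exact mul_le_mul_of_nonneg_right hle hT0
    have hS3 : ∑ p ∈ (Finset.univ : Finset (Fin n)).offDiag,
        ∑ q ∈ (Finset.univ : Finset (Fin m)).offDiag,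
          (k (z (σ (Fin.castAdd m p.1))) (z (σ (Fin.natAdd n q.2))))^2
        ≤ ((m:ℝ) * ((m:ℝ) - 1)) * T := by
      have hin : ∀ p ∈ (Finset.univ : Finset (Fin n)).offDiag,
          ∑ q ∈ (Finset.univ : Finset (Fin m)).offDiag,
            (k (z (σ (Fin.castAdd m p.1))) (z (σ (Fin.natAdd n q.2))))^2
          = ((m:ℝ) - 1) * ∑ j : Fin m,
            (k (z (σ (Fin.castAdd m p.1))) (z (σ (Fin.natAdd n j))))^2 := by
        intro p _
        have := sum_offDiag_snd (fun j : Fin m =>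
          (k (z (σ (Fin.castAdd m p.1))) (z (σ (Fin.natAdd n j))))^2)
        simpa [Fintype.card_fin] using this
      rw [Finset.sum_congr rfl hin, ← Finset.mul_sum]
      have hout := sum_offDiag_fst (fun i : Fin n =>
        ∑ j : Fin m, (k (z (σ (Fin.castAdd m i))) (z (σ (Fin.natAdd n j))))^2)
      simp only [Fintype.card_fin] at hout
      rw [hout]
      have hS_le := hXY σ
      have hkey : (0:ℝ) ≤ ((m:ℝ)-1) * (((m:ℝ)-(n:ℝ)+1) * T) :=
        mul_nonneg (by linarith) (mul_nonneg (by linarith) hT0)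
      have hstep := mul_le_mul_of_nonneg_left
        (mul_le_mul_of_nonneg_left hS_le (by linarith : (0:ℝ) ≤ (n:ℝ)-1))
        (by linarith : (0:ℝ) ≤ (m:ℝ)-1)
      nlinarith [hstep, hkey]
    have hS4 : ∑ p ∈ (Finset.univ : Finset (Fin n)).offDiag,
        ∑ q ∈ (Finset.univ : Finset (Fin m)).offDiag,
          (k (z (σ (Fin.castAdd m p.2))) (z (σ (Fin.natAdd n q.1))))^2
        ≤ ((m:ℝ) * ((m:ℝ) - 1)) * T := by
      have hin : ∀ p ∈ (Finset.univ : Finset (Fin n)).offDiag,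
          ∑ q ∈ (Finset.univ : Finset (Fin m)).offDiag,
            (k (z (σ (Fin.castAdd m p.2))) (z (σ (Fin.natAdd n q.1))))^2
          = ((m:ℝ) - 1) * ∑ j : Fin m,
            (k (z (σ (Fin.castAdd m p.2))) (z (σ (Fin.natAdd n j))))^2 := by
        intro p _
        have := sum_offDiag_fst (fun j : Fin m =>
          (k (z (σ (Fin.castAdd m p.2))) (z (σ (Fin.natAdd n j))))^2)
        simpa [Fintype.card_fin] using this
      rw [Finset.sum_congr rfl hin, ← Finset.mul_sum]
      have hout := sum_offDiag_snd (fun i : Fin n =>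
        ∑ j : Fin m, (k (z (σ (Fin.castAdd m i))) (z (σ (Fin.natAdd n j))))^2)
      simp only [Fintype.card_fin] at hout
      rw [hout]
      have hS_le := hXY σ
      have hkey : (0:ℝ) ≤ ((m:ℝ)-1) * (((m:ℝ)-(n:ℝ)+1) * T) :=
        mul_nonneg (by linarith) (mul_nonneg (by linarith) hT0)
      have hstep := mul_le_mul_of_nonneg_left
        (mul_le_mul_of_nonneg_left hS_le (by linarith : (0:ℝ) ≤ (n:ℝ)-1))
        (by linarith : (0:ℝ) ≤ (m:ℝ)-1)
      nlinarith [hstep, hkey]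
    calc ∑ p ∈ (Finset.univ : Finset (Fin n)).offDiag,
          ∑ q ∈ (Finset.univ : Finset (Fin m)).offDiag,
            (hker k (z (σ (Fin.castAdd m p.1))) (z (σ (Fin.castAdd m p.2)))
              (z (σ (Fin.natAdd n q.1))) (z (σ (Fin.natAdd n q.2))))^2
        ≤ ∑ p ∈ (Finset.univ : Finset (Fin n)).offDiag,
          ∑ q ∈ (Finset.univ : Finset (Fin m)).offDiag,
            4*((k (z (σ (Fin.castAdd m p.1))) (z (σ (Fin.castAdd m p.2))))^2
              + (k (z (σ (Fin.natAdd n q.1))) (z (σ (Fin.natAdd n q.2))))^2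
              + (k (z (σ (Fin.castAdd m p.1))) (z (σ (Fin.natAdd n q.2))))^2
              + (k (z (σ (Fin.castAdd m p.2))) (z (σ (Fin.natAdd n q.1))))^2) :=
          Finset.sum_le_sum fun p _ => Finset.sum_le_sum fun q _ => hpt _ _ _ _
      _ = 4*((∑ p ∈ (Finset.univ : Finset (Fin n)).offDiag,
              ∑ q ∈ (Finset.univ : Finset (Fin m)).offDiag,
                (k (z (σ (Fin.castAdd m p.1))) (z (σ (Fin.castAdd m p.2))))^2)
            + (∑ p ∈ (Finset.univ : Finset (Fin n)).offDiag,
              ∑ q ∈ (Finset.univ : Finset (Fin m)).offDiag,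
                (k (z (σ (Fin.natAdd n q.1))) (z (σ (Fin.natAdd n q.2))))^2)
            + (∑ p ∈ (Finset.univ : Finset (Fin n)).offDiag,
              ∑ q ∈ (Finset.univ : Finset (Fin m)).offDiag,
                (k (z (σ (Fin.castAdd m p.1))) (z (σ (Fin.natAdd n q.2))))^2)
            + (∑ p ∈ (Finset.univ : Finset (Fin n)).offDiag,
              ∑ q ∈ (Finset.univ : Finset (Fin m)).offDiag,
                (k (z (σ (Fin.castAdd m p.2))) (z (σ (Fin.natAdd n q.1))))^2)) := by
          simp only [mul_add, Finset.sum_add_distrib, Finset.mul_sum]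
      _ ≤ 16 * ((m:ℝ) * ((m:ℝ) - 1)) * T := by linarith
  -- bound on the full inner quantity under the sup, for every σ
  have hSbound : ∀ σ : Equiv.Perm (Fin (n+m)),
      (∑ i : Fin n, ∑ i' : Fin n,
        if i ≠ i' then
          (∑ j : Fin m, ∑ j' : Fin m,
            if j ≠ j' then
              hker k (z (σ (Fin.castAdd m i))) (z (σ (Fin.castAdd m i')))
                (z (σ (Fin.natAdd n j))) (z (σ (Fin.natAdd n j')))
            else 0) ^ 2
        else 0)
      ≤ 16 * ((m:ℝ) * ((m:ℝ) - 1))^2 * T := by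
    intro σ
    rw [sum_if_ne_eq]
    calc ∑ p ∈ (Finset.univ : Finset (Fin n)).offDiag,
          (∑ j : Fin m, ∑ j' : Fin m,
            if j ≠ j' then
              hker k (z (σ (Fin.castAdd m p.1))) (z (σ (Fin.castAdd m p.2)))
                (z (σ (Fin.natAdd n j))) (z (σ (Fin.natAdd n j')))
            else 0) ^ 2
        ≤ ∑ p ∈ (Finset.univ : Finset (Fin n)).offDiag,
            ((m:ℝ) * ((m:ℝ) - 1)) *
            ∑ j : Fin m, ∑ j' : Fin m,
              (if j ≠ j' then
                (hker k (z (σ (Fin.castAdd m p.1))) (z (σ (Fin.castAdd m p.2)))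
                  (z (σ (Fin.natAdd n j))) (z (σ (Fin.natAdd n j'))))^2 else 0) :=
          Finset.sum_le_sum fun p _ => hCS σ p.1 p.2
      _ = ((m:ℝ) * ((m:ℝ) - 1)) *
          ∑ p ∈ (Finset.univ : Finset (Fin n)).offDiag,
            ∑ q ∈ (Finset.univ : Finset (Fin m)).offDiag,
              (hker k (z (σ (Fin.castAdd m p.1))) (z (σ (Fin.castAdd m p.2)))
                (z (σ (Fin.natAdd n q.1))) (z (σ (Fin.natAdd n q.2))))^2 := by
          rw [← Finset.mul_sum]
          congr 1
          refine Finset.sum_congr rfl fun p _ => ?_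
          exact sum_if_ne_eq _
      _ ≤ ((m:ℝ) * ((m:ℝ) - 1)) * (16 * ((m:ℝ) * ((m:ℝ) - 1)) * T) :=
          mul_le_mul_of_nonneg_left (hmaster σ) hmmpos.le
      _ = 16 * ((m:ℝ) * ((m:ℝ) - 1))^2 * T := by ring
  have hub0 : 0 ≤ uBar k n m z := by
    unfold uBar
    exact mul_nonneg (one_div_nonneg.mpr hprodpos.le)
      (Real.iSup_nonneg fun σ => Real.sqrt_nonneg _)
  constructor
  · -- first bound
    have hsq : ∀ σ : Equiv.Perm (Fin (n+m)),
        Real.sqrt (∑ i : Fin n, ∑ i' : Fin n,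
          if i ≠ i' then
            (∑ j : Fin m, ∑ j' : Fin m,
              if j ≠ j' then
                hker k (z (σ (Fin.castAdd m i))) (z (σ (Fin.castAdd m i')))
                  (z (σ (Fin.natAdd n j))) (z (σ (Fin.natAdd n j')))
              else 0) ^ 2
          else 0)
        ≤ 4 * ((m:ℝ) * ((m:ℝ) - 1)) * Real.sqrt T := by
      intro σ
      have h1 := Real.sqrt_le_sqrt (hSbound σ)
      refine h1.trans_eq ?_
      rw [show 16 * ((m:ℝ) * ((m:ℝ) - 1))^2 * T = (4 * ((m:ℝ) * ((m:ℝ) - 1)))^2 * T by ring,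
        Real.sqrt_mul (by positivity), Real.sqrt_sq (by nlinarith)]
    have hub : uBar k n m z ≤ 4 * Real.sqrt T / ((n:ℝ) * ((n:ℝ) - 1)) := by
      unfold uBar
      calc (1 / ((n:ℝ) * ((n:ℝ) - 1) * (m:ℝ) * ((m:ℝ) - 1))) * _
          ≤ (1 / ((n:ℝ) * ((n:ℝ) - 1) * (m:ℝ) * ((m:ℝ) - 1))) *
            (4 * ((m:ℝ) * ((m:ℝ) - 1)) * Real.sqrt T) :=
            mul_le_mul_of_nonneg_left (ciSup_le hsq) (one_div_nonneg.mpr hprodpos.le)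
        _ = 4 * Real.sqrt T / ((n:ℝ) * ((n:ℝ) - 1)) := by
            have : (n:ℝ) - 1 ≠ 0 := by linarith
            have : (m:ℝ) - 1 ≠ 0 := by linarith
            have : (n:ℝ) ≠ 0 := by linarith
            have : (m:ℝ) ≠ 0 := by linarith
            field_simp
    have h2 := pow_le_pow_left₀ hub0 hub 2
    refine h2.trans_eq ?_
    have hnh : normHat k n z = (1 / ((n:ℝ) * ((n:ℝ) - 1))) * T := by
      unfold normHat
      rw [sum_if_ne_eq]
    rw [hnh, div_pow, mul_pow, Real.sq_sqrt hT0]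
    field_simp
    ring
  · -- second bound
    intro κ hκ
    have hκ0 : 0 ≤ κ := by
      have h := hκ (z ⟨0, by omega⟩) (z ⟨0, by omega⟩)
      exact le_trans h.1 h.2
    have hpt2 : ∀ a b c d : X, (hker k a b c d)^2 ≤ 4*κ^2 := by
      intro a b c d
      simp only [hker]
      obtain ⟨h1, h2⟩ := hκ a b
      obtain ⟨h3, h4⟩ := hκ c d
      obtain ⟨h5, h6⟩ := hκ a d
      obtain ⟨h7, h8⟩ := hκ b c
      nlinarith
    have hS2bound : ∀ σ : Equiv.Perm (Fin (n+m)),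
        (∑ i : Fin n, ∑ i' : Fin n,
          if i ≠ i' then
            (∑ j : Fin m, ∑ j' : Fin m,
              if j ≠ j' then
                hker k (z (σ (Fin.castAdd m i))) (z (σ (Fin.castAdd m i')))
                  (z (σ (Fin.natAdd n j))) (z (σ (Fin.natAdd n j')))
              else 0) ^ 2
          else 0)
        ≤ ((n:ℝ) * ((n:ℝ) - 1)) * ((m:ℝ) * ((m:ℝ) - 1))^2 * (4*κ^2) := by
      intro σ
      rw [sum_if_ne_eq]
      have hcard_n : (((Finset.univ : Finset (Fin n)).offDiag.card : ℝ))
          = (n:ℝ) * ((n:ℝ) - 1) := by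
        rw [offDiag_card_real]; simp [Fintype.card_fin]
      have hcard_m : (((Finset.univ : Finset (Fin m)).offDiag.card : ℝ))
          = (m:ℝ) * ((m:ℝ) - 1) := by
        rw [offDiag_card_real]; simp [Fintype.card_fin]
      have hper : ∀ p ∈ (Finset.univ : Finset (Fin n)).offDiag,
          (∑ j : Fin m, ∑ j' : Fin m,
            if j ≠ j' then
              hker k (z (σ (Fin.castAdd m p.1))) (z (σ (Fin.castAdd m p.2)))
                (z (σ (Fin.natAdd n j))) (z (σ (Fin.natAdd n j')))
            else 0) ^ 2
          ≤ ((m:ℝ) * ((m:ℝ) - 1))^2 * (4*κ^2) := by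
        intro p _
        refine (hCS σ p.1 p.2).trans ?_
        have hinner : ∑ j : Fin m, ∑ j' : Fin m,
            (if j ≠ j' then
              (hker k (z (σ (Fin.castAdd m p.1))) (z (σ (Fin.castAdd m p.2)))
                (z (σ (Fin.natAdd n j))) (z (σ (Fin.natAdd n j'))))^2 else 0)
            ≤ ((m:ℝ) * ((m:ℝ) - 1)) * (4*κ^2) := by
          rw [sum_if_ne_eq]
          calc ∑ q ∈ (Finset.univ : Finset (Fin m)).offDiag,
                (hker k (z (σ (Fin.castAdd m p.1))) (z (σ (Fin.castAdd m p.2)))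
                  (z (σ (Fin.natAdd n q.1))) (z (σ (Fin.natAdd n q.2))))^2
              ≤ ∑ _q ∈ (Finset.univ : Finset (Fin m)).offDiag, 4*κ^2 :=
                Finset.sum_le_sum fun q _ => hpt2 _ _ _ _
            _ = ((m:ℝ) * ((m:ℝ) - 1)) * (4*κ^2) := by
                rw [Finset.sum_const, nsmul_eq_mul, hcard_m]
        calc ((m:ℝ) * ((m:ℝ) - 1)) * ∑ j : Fin m, ∑ j' : Fin m,
              (if j ≠ j' then
                (hker k (z (σ (Fin.castAdd m p.1))) (z (σ (Fin.castAdd m p.2)))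
                  (z (σ (Fin.natAdd n j))) (z (σ (Fin.natAdd n j'))))^2 else 0)
            ≤ ((m:ℝ) * ((m:ℝ) - 1)) * (((m:ℝ) * ((m:ℝ) - 1)) * (4*κ^2)) :=
              mul_le_mul_of_nonneg_left hinner hmmpos.le
          _ = ((m:ℝ) * ((m:ℝ) - 1))^2 * (4*κ^2) := by ring
      calc ∑ p ∈ (Finset.univ : Finset (Fin n)).offDiag,
            (∑ j : Fin m, ∑ j' : Fin m,
              if j ≠ j' then
                hker k (z (σ (Fin.castAdd m p.1))) (z (σ (Fin.castAdd m p.2)))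
                  (z (σ (Fin.natAdd n j))) (z (σ (Fin.natAdd n j')))
              else 0) ^ 2
          ≤ ∑ _p ∈ (Finset.univ : Finset (Fin n)).offDiag,
              ((m:ℝ) * ((m:ℝ) - 1))^2 * (4*κ^2) := Finset.sum_le_sum hper
        _ = ((n:ℝ) * ((n:ℝ) - 1)) * ((m:ℝ) * ((m:ℝ) - 1))^2 * (4*κ^2) := by
            rw [Finset.sum_const, nsmul_eq_mul, hcard_n]; ring
    have hsq : ∀ σ : Equiv.Perm (Fin (n+m)),
        Real.sqrt (∑ i : Fin n, ∑ i' : Fin n,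
          if i ≠ i' then
            (∑ j : Fin m, ∑ j' : Fin m,
              if j ≠ j' then
                hker k (z (σ (Fin.castAdd m i))) (z (σ (Fin.castAdd m i')))
                  (z (σ (Fin.natAdd n j))) (z (σ (Fin.natAdd n j')))
              else 0) ^ 2
          else 0)
        ≤ 2 * κ * ((m:ℝ) * ((m:ℝ) - 1)) * Real.sqrt ((n:ℝ) * ((n:ℝ) - 1)) := by
      intro σ
      have h1 := Real.sqrt_le_sqrt (hS2bound σ)
      refine h1.trans_eq ?_
      rw [show ((n:ℝ) * ((n:ℝ) - 1)) * ((m:ℝ) * ((m:ℝ) - 1))^2 * (4*κ^2)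
          = (2 * κ * ((m:ℝ) * ((m:ℝ) - 1)))^2 * ((n:ℝ) * ((n:ℝ) - 1)) by ring,
        Real.sqrt_mul (by positivity), Real.sqrt_sq (by nlinarith)]
    have hub : uBar k n m z
        ≤ 2 * κ * Real.sqrt ((n:ℝ) * ((n:ℝ) - 1)) / ((n:ℝ) * ((n:ℝ) - 1)) := by
      unfold uBar
      calc (1 / ((n:ℝ) * ((n:ℝ) - 1) * (m:ℝ) * ((m:ℝ) - 1))) * _
          ≤ (1 / ((n:ℝ) * ((n:ℝ) - 1) * (m:ℝ) * ((m:ℝ) - 1))) *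
            (2 * κ * ((m:ℝ) * ((m:ℝ) - 1)) * Real.sqrt ((n:ℝ) * ((n:ℝ) - 1))) :=
            mul_le_mul_of_nonneg_left (ciSup_le hsq) (one_div_nonneg.mpr hprodpos.le)
        _ = 2 * κ * Real.sqrt ((n:ℝ) * ((n:ℝ) - 1)) / ((n:ℝ) * ((n:ℝ) - 1)) := by
            have : (n:ℝ) - 1 ≠ 0 := by linarith
            have : (m:ℝ) - 1 ≠ 0 := by linarith
            have : (n:ℝ) ≠ 0 := by linarith
            have : (m:ℝ) ≠ 0 := by linarith
            field_simp
    have h2 := pow_le_pow_left₀ hub0 hub 2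
    refine h2.trans_eq ?_
    rw [div_pow, mul_pow, mul_pow, Real.sq_sqrt hnnpos.le]
    field_simp
    ring
end

section
/- Let f : Z_1 × ⋯ × Z_n → ℝ have the bounded differences property with constants L_1,…,L_n < ∞: |f(z_1,…,z_ℓ,…,z_n) − f(z_1,…,z_ℓ',…,z_n)| ≤ L_ℓ for all choices of coordinates and all ℓ ∈ [n]. Then for any independent random variables Z_1,…,Z_n (with f(Z_1,…,Z_n) measurable and integrable) and any t ∈ ℝ, E exp(t ( f(Z_1,…,Z_n) − E f(Z_1,…,Z_n) )) ≤ exp( (t²/8) Σ_{ℓ=1}^n L_ℓ² ). -/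
open MeasureTheory
open scoped ENNReal NNReal BigOperators RealInnerProductSpace Classical

/-!
Independence makes the law of `(W i)ᵢ` the product of its marginals, so it suffices to treat a
product measure, by induction on the number of coordinates. Split off the first coordinate: for
fixed values `y` of the others, `x ↦ f (x, y)` takes values in an interval of length `L₀`, so by
Hoeffding's lemma its mgf centred at `F y = ∫ f (x, y) dx` is at most `exp (t² L₀² / 8)`. The
conditional mean `F` again has bounded differences, with constants `L₁, …, Lₙ₋₁`, and the same
mean as `f`, so the induction hypothesis bounds the remaining factor.
-/

open ProbabilityTheory Real

section BoundedDifferences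

variable {ι : Type*} [DecidableEq ι] {Z : ι → Type*}

def HasBoundedDifferences (f : (∀ i, Z i) → ℝ) (L : ι → ℝ) : Prop :=
  ∀ (i : ι) (z : ∀ i, Z i) (z' : Z i), |f z - f (Function.update z i z')| ≤ L i

variable [Fintype ι] {f : (∀ i, Z i) → ℝ} {L : ι → ℝ}

theorem HasBoundedDifferences.abs_sub_le_sum (hf : HasBoundedDifferences f L)
    (z w : ∀ i, Z i) : |f z - f w| ≤ ∑ i, L i := by
  suffices h : ∀ s : Finset ι, |f z - f (s.piecewise w z)| ≤ ∑ i ∈ s, L i by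
    simpa using h Finset.univ
  intro s
  induction s using Finset.induction_on with
  | empty => simp
  | insert j s hj ih =>
    rw [Finset.piecewise_insert, Finset.sum_insert hj, add_comm]
    set z' := s.piecewise w z
    calc |f z - f (Function.update z' j (w j))|
        ≤ |f z - f z'| + |f z' - f (Function.update z' j (w j))| := abs_sub_le _ _ _
      _ ≤ ∑ i ∈ s, L i + L j := add_le_add ih (hf _ _ _)

theorem HasBoundedDifferences.mem_Icc (hf : HasBoundedDifferences f L) (z₀ z : ∀ i, Z i) :
    f z ∈ Set.Icc (f z₀ - ∑ i, L i) (f z₀ + ∑ i, L i) := by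
  have := abs_le.1 (hf.abs_sub_le_sum z z₀)
  constructor <;> linarith [this.1, this.2]

end BoundedDifferences

section Hoeffding

variable {α β : Type*} [MeasurableSpace α] [MeasurableSpace β]
  {μ : Measure α} {ν : Measure β} [IsProbabilityMeasure μ] [IsProbabilityMeasure ν]

theorem integral_exp_mul_sub_integral_le_of_abs_sub_le {X : α → ℝ} (hX : AEMeasurable X μ)
    {L : ℝ} (hL : ∀ x y, |X x - X y| ≤ L) (t : ℝ) :
    ∫ x, exp (t * (X x - ∫ y, X y ∂μ)) ∂μ ≤ exp (t ^ 2 / 8 * L ^ 2) := by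
  obtain ⟨x₀⟩ := nonempty_of_isProbabilityMeasure μ
  have : Nonempty α := ⟨x₀⟩
  have hbdd : BddBelow (Set.range X) :=
    ⟨X x₀ - L, by rintro _ ⟨x, rfl⟩; linarith [(abs_le.1 (hL x₀ x)).2]⟩
  have hIcc : ∀ x, X x ∈ Set.Icc (⨅ y, X y) ((⨅ y, X y) + L) := fun x =>
    ⟨ciInf_le hbdd x, by
      have : X x - L ≤ ⨅ y, X y := le_ciInf fun y => by linarith [(abs_le.1 (hL x y)).2]
      linarith⟩
  convert (hasSubgaussianMGF_of_mem_Icc hX (ae_of_all μ hIcc)).mgf_le t using 2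
  · rfl
  · simp only [add_sub_cancel_left, NNReal.coe_pow, NNReal.coe_div, coe_nnnorm, norm_eq_abs,
      NNReal.coe_ofNat, div_pow, sq_abs]
    ring

theorem abs_integral_sub_integral_le {u v : α → ℝ} (hu : Integrable u μ) (hv : Integrable v μ)
    {L : ℝ} (h : ∀ x, |u x - v x| ≤ L) : |∫ x, u x ∂μ - ∫ x, v x ∂μ| ≤ L := by
  rw [← integral_sub hu hv]
  simpa using norm_integral_le_of_norm_le_const (f := fun x => u x - v x) (ae_of_all μ h)

theorem integral_exp_mul_sub_prod_le {g : α × β → ℝ} (hg : Measurable g) {a b : ℝ}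
    (hab : ∀ q, g q ∈ Set.Icc a b) {L : ℝ} (hL : ∀ x x' y, |g (x, y) - g (x', y)| ≤ L)
    (t c : ℝ) :
    ∫ q, exp (t * (g q - c)) ∂μ.prod ν
      ≤ exp (t ^ 2 / 8 * L ^ 2) * ∫ y, exp (t * (∫ x, g (x, y) ∂μ - c)) ∂ν := by
  set F : β → ℝ := fun y => ∫ x, g (x, y) ∂μ
  have hslice : ∀ y, Measurable fun x => g (x, y) := fun y => hg.comp measurable_prodMk_right
  have hF : Measurable F := hg.stronglyMeasurable.integral_prod_left'.measurable
  have hFab : ∀ y, F y ∈ Set.Icc a b := fun y =>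
    (convex_Icc a b).integral_mem isClosed_Icc (ae_of_all μ fun x => hab (x, y))
      (Integrable.of_mem_Icc a b (hslice y).aemeasurable (ae_of_all μ fun x => hab (x, y)))
  have hint : Integrable (fun q => exp (t * (g q - c))) (μ.prod ν) :=
    integrable_exp_mul_of_mem_Icc (a := a - c) (b := b - c) (hg.sub_const c).aemeasurable
      (ae_of_all _ fun q => ⟨by linarith [(hab q).1], by linarith [(hab q).2]⟩)
  have hFint : Integrable (fun y => exp (t * (F y - c))) ν :=
    integrable_exp_mul_of_mem_Icc (a := a - c) (b := b - c) (hF.sub_const c).aemeasurable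
      (ae_of_all _ fun y => ⟨by linarith [(hFab y).1], by linarith [(hFab y).2]⟩)
  rw [integral_prod_symm _ hint, ← integral_const_mul]
  refine integral_mono (Integrable.integral_prod_right hint) (hFint.const_mul _) fun y => ?_
  calc ∫ x, exp (t * (g (x, y) - c)) ∂μ
      = (∫ x, exp (t * (g (x, y) - F y)) ∂μ) * exp (t * (F y - c)) := by
        rw [← integral_mul_const]
        congr 1 with x
        rw [← exp_add]
        ring_nf
    _ ≤ exp (t ^ 2 / 8 * L ^ 2) * exp (t * (F y - c)) := by
        gcongr
        exact integral_exp_mul_sub_integral_le_of_abs_sub_le (hslice y).aemeasurable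
          (fun x x' => hL x x' y) t

end Hoeffding

section Product

variable {n : ℕ}

theorem HasBoundedDifferences.integral_insertNth_zero {Z : Fin (n + 1) → Type*}
    [∀ i, MeasurableSpace (Z i)] {ν₀ : Measure (Z 0)} [IsProbabilityMeasure ν₀]
    {f : (∀ i, Z i) → ℝ} (hf : Measurable f) {L : Fin (n + 1) → ℝ}
    (hbd : HasBoundedDifferences f L) :
    HasBoundedDifferences (fun y => ∫ x, f (Fin.insertNth 0 x y) ∂ν₀)
      (fun j => L (Fin.succAbove 0 j)) := by
  intro j y w
  obtain ⟨x₀⟩ := nonempty_of_isProbabilityMeasure ν₀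
  have hslice : ∀ y', Integrable (fun x => f (Fin.insertNth 0 x y')) ν₀ := fun y' =>
    Integrable.of_mem_Icc _ _ (hf.comp ((MeasurableEquiv.piFinSuccAbove Z 0).symm.measurable.comp
      measurable_prodMk_right)).aemeasurable
      (ae_of_all _ fun x => hbd.mem_Icc (Fin.insertNth 0 x₀ y) _)
  refine abs_integral_sub_integral_le (hslice y) (hslice _) fun x => ?_
  rw [Fin.insertNth_update]
  exact hbd _ _ _

theorem integral_exp_mul_sub_integral_pi_le {Z : Fin n → Type*}
    [∀ i, MeasurableSpace (Z i)] (ν : ∀ i, Measure (Z i)) [∀ i, IsProbabilityMeasure (ν i)]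
    {f : (∀ i, Z i) → ℝ} (hf : Measurable f) {L : Fin n → ℝ} (hbd : HasBoundedDifferences f L)
    (t : ℝ) :
    ∫ z, exp (t * (f z - ∫ z', f z' ∂Measure.pi ν)) ∂Measure.pi ν
      ≤ exp (t ^ 2 / 8 * ∑ ℓ, L ℓ ^ 2) := by
  induction n with
  | zero => rw [Measure.pi_of_empty]; simp
  | succ n ih =>
    have hmp := (measurePreserving_piFinSuccAbove ν 0).symm
    set ν' := Measure.pi fun j => ν (Fin.succAbove 0 j)
    set m := ∫ z, f z ∂Measure.pi ν
    set g : Z 0 × (∀ j, Z (Fin.succAbove 0 j)) → ℝ := fun q => f (Fin.insertNth 0 q.1 q.2)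
    have hg : Measurable g := hf.comp (MeasurableEquiv.piFinSuccAbove Z 0).symm.measurable
    have : ∀ i, Nonempty (Z i) := fun i => nonempty_of_isProbabilityMeasure (ν i)
    obtain ⟨z₀⟩ : Nonempty (∀ i, Z i) := inferInstance
    have hgab : ∀ q, g q ∈ Set.Icc (f z₀ - ∑ i, L i) (f z₀ + ∑ i, L i) := fun q =>
      hbd.mem_Icc z₀ _
    have hmean : m = ∫ y, ∫ x, g (x, y) ∂ν 0 ∂ν' :=
      (hmp.integral_comp' f).symm.trans
        (integral_prod_symm g (Integrable.of_mem_Icc _ _ hg.aemeasurable (ae_of_all _ hgab)))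
    calc ∫ z, exp (t * (f z - m)) ∂Measure.pi ν
        = ∫ q, exp (t * (g q - m)) ∂(ν 0).prod ν' := (hmp.integral_comp' _).symm
      _ ≤ exp (t ^ 2 / 8 * L 0 ^ 2) * ∫ y, exp (t * (∫ x, g (x, y) ∂ν 0 - m)) ∂ν' :=
          integral_exp_mul_sub_prod_le hg hgab
            (fun x x' y => by simpa [g] using hbd 0 (Fin.insertNth 0 x y) x') _ _
      _ ≤ exp (t ^ 2 / 8 * L 0 ^ 2) * exp (t ^ 2 / 8 * ∑ j, L (Fin.succAbove 0 j) ^ 2) := by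
          rw [hmean]
          gcongr
          exact ih _ hg.stronglyMeasurable.integral_prod_left'.measurable
            (hbd.integral_insertNth_zero hf)
      _ = exp (t ^ 2 / 8 * ∑ ℓ, L ℓ ^ 2) := by
          rw [← exp_add, Fin.sum_univ_succAbove _ 0]
          ring_nf

end Product

theorem bounded_differences_mgf_general
    (n : ℕ) (Z : Fin n → Type) [∀ i, MeasurableSpace (Z i)]
    (f : (∀ i, Z i) → ℝ) (hf : Measurable f)
    (L : Fin n → ℝ)
    (hbd : ∀ (ℓ : Fin n) (z : ∀ i, Z i) (z' : Z ℓ),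
      |f z - f (Function.update z ℓ z')| ≤ L ℓ)
    (Ω : Type) [MeasurableSpace Ω] (μ : Measure Ω) [IsProbabilityMeasure μ]
    (W : ∀ i, Ω → Z i) (hW : ∀ i, Measurable (W i))
    (hindep : ProbabilityTheory.iIndepFun W μ)
    (t : ℝ) :
    (∫ ω, Real.exp (t * (f (fun i => W i ω) - ∫ ω', f fun i => W i ω' ∂μ)) ∂μ)
      ≤ Real.exp (t ^ 2 / 8 * ∑ ℓ : Fin n, (L ℓ) ^ 2) := by
  have : ∀ i, IsProbabilityMeasure (μ.map (W i)) := fun i =>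
    Measure.isProbabilityMeasure_map (hW i).aemeasurable
  set P := Measure.pi fun i => μ.map (W i)
  have hWmeas : Measurable fun ω i => W i ω := measurable_pi_lambda _ hW
  have hlaw : μ.map (fun ω i => W i ω) = P := hindep.map_fun_eq_pi_map fun i => (hW i).aemeasurable
  have hmean : ∫ ω, f (fun i => W i ω) ∂μ = ∫ z, f z ∂P := by
    rw [← hlaw, integral_map hWmeas.aemeasurable hf.aestronglyMeasurable]
  rw [hmean, ← integral_map (f := fun z => exp (t * (f z - ∫ z, f z ∂P))) hWmeas.aemeasurable
    (by fun_prop), hlaw]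
  exact integral_exp_mul_sub_integral_pi_le _ hf hbd t

/-- PAC-Bayes-style bounded differences MGF bound / Hoeffding MGF form
of McDiarmid's inequality.
If `f` has the bounded differences property with constants `L_ℓ` and `W_1,…,W_n` are
independent random variables, then for every `t ∈ ℝ`,
`E exp(t(f(W) − E f(W))) ≤ exp((t²/8) ∑ L_ℓ²)`. -/
theorem bounded_differences_mgf
    (n : ℕ) (Z : Fin n → Type) [∀ i, MeasurableSpace (Z i)]
    (f : (∀ i, Z i) → ℝ) (hf : Measurable f)
    (L : Fin n → ℝ)
    (hbd : ∀ (ℓ : Fin n) (z : ∀ i, Z i) (z' : Z ℓ),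
      |f z - f (Function.update z ℓ z')| ≤ L ℓ)
    (Ω : Type) [MeasurableSpace Ω] (μ : Measure Ω) [IsProbabilityMeasure μ]
    (W : ∀ i, Ω → Z i) (hW : ∀ i, Measurable (W i))
    (hindep : ProbabilityTheory.iIndepFun W μ)
    (hint : Integrable (fun ω => f fun i => W i ω) μ)
    (t : ℝ) :
    (∫ ω, Real.exp (t * (f (fun i => W i ω) - ∫ ω', f fun i => W i ω' ∂μ)) ∂μ)
      ≤ Real.exp (t ^ 2 / 8 * ∑ ℓ : Fin n, (L ℓ) ^ 2) :=
  bounded_differences_mgf_general n Z f hf L hbd Ω μ W hW hindep t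
end

section
/- Let k be a symmetric measurable kernel with |k(x,y)| ≤ κ for all x, y, and let MMD̂²(x,y;k) be the unbiased MMD estimator on samples x of size n and y of size m. Then MMD̂² has the bounded differences property: changing a single coordinate x_ℓ of x (with all other coordinates fixed) changes the value of MMD̂²(x,y;k) by at most 8κ/n, and changing a single coordinate y_ℓ of y changes it by at most 8κ/m. Consequently the sum of squared bounded-difference constants over all n+m coordinates is at most 64κ²(1/n + 1/m). -/
open MeasureTheory
open scoped ENNReal NNReal BigOperators RealInnerProductSpace Classical

private lemma sum_ite_ne_const {n : ℕ} (ℓ : Fin n) (c : ℝ) :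
    (∑ i : Fin n, if i ≠ ℓ then c else 0) = ((n : ℝ) - 1) * c := by
  have h : ∀ i : Fin n, (if i ≠ ℓ then c else 0) = c - (if i = ℓ then c else 0) := by
    intro i; by_cases h : i = ℓ <;> simp [h]
  rw [Finset.sum_congr rfl fun i _ => h i, Finset.sum_sub_distrib]
  rw [Fintype.sum_ite_eq' ℓ (fun _ => c)]
  simp [Finset.card_univ]
  ring

private lemma mmd_diff_x {X : Type} {n m : ℕ} (k : X → X → ℝ) (κ : ℝ)
    (hbd : ∀ a b, |k a b| ≤ κ)
    (ℓ : Fin n) (x : Fin n → X) (x' : X) (y : Fin m → X) :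
    |mmdSqHat k x y - mmdSqHat k (Function.update x ℓ x') y| ≤ 8 * κ / n := by
  classical
  have hκ : 0 ≤ κ := le_trans (abs_nonneg _) (hbd (x ℓ) (x ℓ))
  have hn1 : 1 ≤ n := ℓ.pos
  set z := Function.update x ℓ x' with hz
  have hzne : ∀ i : Fin n, i ≠ ℓ → z i = x i := fun i h => Function.update_of_ne h _ _
  have hdiff : mmdSqHat k x y - mmdSqHat k z y =
      (1 / ((n : ℝ) * ((n : ℝ) - 1))) *
        (∑ i : Fin n, ∑ i' : Fin n,
          ((if i ≠ i' then k (x i) (x i') else 0) - (if i ≠ i' then k (z i) (z i') else 0)))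
      - (2 / ((m : ℝ) * (n : ℝ))) *
        (∑ i : Fin n, ∑ j : Fin m, (k (x i) (y j) - k (z i) (y j))) := by
    simp only [mmdSqHat, Finset.sum_sub_distrib]
    ring
  rw [hdiff]
  set S1 := ∑ i : Fin n, ∑ i' : Fin n,
      ((if i ≠ i' then k (x i) (x i') else 0) - (if i ≠ i' then k (z i) (z i') else 0)) with hS1def
  set S2 := ∑ i : Fin n, ∑ j : Fin m, (k (x i) (y j) - k (z i) (y j)) with hS2def
  have hptw : ∀ i i' : Fin n,
      |(if i ≠ i' then k (x i) (x i') else 0) - (if i ≠ i' then k (z i) (z i') else 0)|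
      ≤ (if i = ℓ ∧ i' ≠ ℓ then 2 * κ else 0) + (if i' = ℓ ∧ i ≠ ℓ then 2 * κ else 0) := by
    intro i i'
    by_cases hi : i = ℓ
    · by_cases hi' : i' = ℓ
      · subst hi; subst hi'; simp
      · have hne : i ≠ i' := by rw [hi]; exact fun h => hi' h.symm
        rw [if_pos hne, if_pos hne, if_pos (show i = ℓ ∧ i' ≠ ℓ from ⟨hi, hi'⟩),
          if_neg (show ¬(i' = ℓ ∧ i ≠ ℓ) from fun h => hi' h.1), add_zero]
        calc |k (x i) (x i') - k (z i) (z i')| ≤ |k (x i) (x i')| + |k (z i) (z i')| :=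
              abs_sub _ _
          _ ≤ κ + κ := add_le_add (hbd _ _) (hbd _ _)
          _ = 2 * κ := by ring
    · by_cases hi' : i' = ℓ
      · have hne : i ≠ i' := by rw [hi']; exact hi
        rw [if_pos hne, if_pos hne, if_neg (show ¬(i = ℓ ∧ i' ≠ ℓ) from fun h => hi h.1),
          if_pos (show i' = ℓ ∧ i ≠ ℓ from ⟨hi', hi⟩), zero_add]
        calc |k (x i) (x i') - k (z i) (z i')| ≤ |k (x i) (x i')| + |k (z i) (z i')| :=
              abs_sub _ _
          _ ≤ κ + κ := add_le_add (hbd _ _) (hbd _ _)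
          _ = 2 * κ := by ring
      · rw [hzne i hi, hzne i' hi']
        simp [hi, hi']
  have hA : ∀ c : ℝ, (∑ i : Fin n, ∑ i' : Fin n, if i = ℓ ∧ i' ≠ ℓ then c else 0)
      = ((n : ℝ) - 1) * c := by
    intro c
    have h : ∀ i : Fin n, (∑ i' : Fin n, if i = ℓ ∧ i' ≠ ℓ then c else 0)
        = if i = ℓ then ((n : ℝ) - 1) * c else 0 := by
      intro i
      by_cases hi : i = ℓ
      · simp only [hi, true_and, if_pos]
        exact sum_ite_ne_const ℓ c
      · simp [hi]
    rw [Finset.sum_congr rfl fun i _ => h i, Fintype.sum_ite_eq' ℓ (fun _ => ((n : ℝ) - 1) * c)]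
  have hB : ∀ c : ℝ, (∑ i : Fin n, ∑ i' : Fin n, if i' = ℓ ∧ i ≠ ℓ then c else 0)
      = ((n : ℝ) - 1) * c := by
    intro c
    have h : ∀ i : Fin n, (∑ i' : Fin n, if i' = ℓ ∧ i ≠ ℓ then c else 0)
        = if i ≠ ℓ then c else 0 := by
      intro i
      by_cases hi : i = ℓ
      · simp [hi]
      · simp only [hi, ne_eq, not_false_eq_true, and_true, if_pos]
        rw [Fintype.sum_ite_eq' ℓ (fun _ => c)]
    rw [Finset.sum_congr rfl fun i _ => h i, sum_ite_ne_const ℓ c]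
  have hS1 : |S1| ≤ ((n : ℝ) - 1) * (4 * κ) := by
    have h1 : |S1| ≤ ∑ i : Fin n, ∑ i' : Fin n,
        ((if i = ℓ ∧ i' ≠ ℓ then 2 * κ else 0) + (if i' = ℓ ∧ i ≠ ℓ then 2 * κ else 0)) := by
      refine (Finset.abs_sum_le_sum_abs _ _).trans (Finset.sum_le_sum fun i _ => ?_)
      exact (Finset.abs_sum_le_sum_abs _ _).trans (Finset.sum_le_sum fun i' _ => hptw i i')
    refine h1.trans_eq ?_
    rw [Finset.sum_congr rfl fun i _ => Finset.sum_add_distrib, Finset.sum_add_distrib,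
      hA (2 * κ), hB (2 * κ)]
    ring
  have hS2 : |S2| ≤ (m : ℝ) * (2 * κ) := by
    have h : ∀ i : Fin n, |∑ j : Fin m, (k (x i) (y j) - k (z i) (y j))|
        ≤ if i = ℓ then (m : ℝ) * (2 * κ) else 0 := by
      intro i
      by_cases hi : i = ℓ
      · rw [if_pos hi]
        refine (Finset.abs_sum_le_sum_abs _ _).trans ?_
        calc (∑ j : Fin m, |k (x i) (y j) - k (z i) (y j)|)
            ≤ ∑ _j : Fin m, 2 * κ := Finset.sum_le_sum fun j _ =>
              ((abs_sub _ _).trans (by linarith [hbd (x i) (y j), hbd (z i) (y j)]))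
          _ = (m : ℝ) * (2 * κ) := by simp [Finset.sum_const, Finset.card_univ]
      · rw [if_neg hi]
        simp [hzne i hi]
    refine (Finset.abs_sum_le_sum_abs _ _).trans ?_
    refine (Finset.sum_le_sum fun i _ => h i).trans ?_
    rw [Fintype.sum_ite_eq' ℓ (fun _ => (m : ℝ) * (2 * κ))]
  have h3 : |1 / ((n : ℝ) * ((n : ℝ) - 1))| * |S1| ≤ 4 * κ / n := by
    rcases eq_or_lt_of_le hn1 with h1 | h2
    · have : ((n : ℝ) - 1) = 0 := by rw [← h1]; norm_num
      rw [this]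
      simp only [mul_zero, div_zero, abs_zero, zero_mul]
      positivity
    · have hn0 : (0 : ℝ) < n := by exact_mod_cast Nat.lt_of_lt_of_le Nat.zero_lt_one hn1
      have hn1' : (0 : ℝ) < (n : ℝ) - 1 := by
        have : (2 : ℝ) ≤ n := by exact_mod_cast h2
        linarith
      have hc : (0 : ℝ) ≤ 1 / ((n : ℝ) * ((n : ℝ) - 1)) := by positivity
      rw [abs_of_nonneg hc]
      calc 1 / ((n : ℝ) * ((n : ℝ) - 1)) * |S1|
          ≤ 1 / ((n : ℝ) * ((n : ℝ) - 1)) * (((n : ℝ) - 1) * (4 * κ)) :=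
            mul_le_mul_of_nonneg_left hS1 hc
        _ = 4 * κ / n := by field_simp
  have h4 : |2 / ((m : ℝ) * (n : ℝ))| * |S2| ≤ 4 * κ / n := by
    have hn0 : (0 : ℝ) < n := by exact_mod_cast Nat.lt_of_lt_of_le Nat.zero_lt_one hn1
    rcases Nat.eq_zero_or_pos m with hm | hm
    · subst hm
      simp only [Nat.cast_zero, zero_mul, div_zero, abs_zero, zero_mul]
      positivity
    · have hm0 : (0 : ℝ) < m := by exact_mod_cast hm
      have hc : (0 : ℝ) ≤ 2 / ((m : ℝ) * (n : ℝ)) := by positivity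
      rw [abs_of_nonneg hc]
      calc 2 / ((m : ℝ) * (n : ℝ)) * |S2|
          ≤ 2 / ((m : ℝ) * (n : ℝ)) * ((m : ℝ) * (2 * κ)) := mul_le_mul_of_nonneg_left hS2 hc
        _ = 4 * κ / n := by field_simp; ring
  calc |1 / ((n : ℝ) * ((n : ℝ) - 1)) * S1 - 2 / ((m : ℝ) * (n : ℝ)) * S2|
      ≤ |1 / ((n : ℝ) * ((n : ℝ) - 1)) * S1| + |2 / ((m : ℝ) * (n : ℝ)) * S2| := abs_sub _ _
    _ = |1 / ((n : ℝ) * ((n : ℝ) - 1))| * |S1| + |2 / ((m : ℝ) * (n : ℝ))| * |S2| := by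
        rw [abs_mul, abs_mul]
    _ ≤ 4 * κ / n + 4 * κ / n := add_le_add h3 h4
    _ = 8 * κ / n := by ring

private lemma mmdSqHat_comm {X : Type} {n m : ℕ} (k : X → X → ℝ)
    (hsymm : ∀ a b, k a b = k b a) (x : Fin n → X) (y : Fin m → X) :
    mmdSqHat k x y = mmdSqHat k y x := by
  unfold mmdSqHat
  have h : (∑ j : Fin m, ∑ i : Fin n, k (y j) (x i)) = ∑ i : Fin n, ∑ j : Fin m, k (x i) (y j) := by
    rw [Finset.sum_comm]
    exact Finset.sum_congr rfl fun i _ => Finset.sum_congr rfl fun j _ => hsymm _ _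
  rw [h]
  ring

/-- Bounded differences of the unbiased MMD estimator.
For a symmetric kernel with `|k| ≤ κ`, changing a single `x`-coordinate changes
`MMD̂²(x,y;k)` by at most `8κ/n`, changing a single `y`-coordinate changes it by at
most `8κ/m`, and the sum of squared bounded-difference constants is at most
`64κ²(1/n + 1/m)`. -/
theorem mmdSqHat_bounded_differences
    (X : Type) (n m : ℕ) (k : X → X → ℝ) (κ : ℝ)
    (hsymm : ∀ x y, k x y = k y x)
    (hbd : ∀ x y, |k x y| ≤ κ) :
    (∀ (ℓ : Fin n) (x : Fin n → X) (x' : X) (y : Fin m → X),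
        |mmdSqHat k x y - mmdSqHat k (Function.update x ℓ x') y| ≤ 8 * κ / n)
      ∧ (∀ (ℓ : Fin m) (x : Fin n → X) (y : Fin m → X) (y' : X),
          |mmdSqHat k x y - mmdSqHat k x (Function.update y ℓ y')| ≤ 8 * κ / m)
      ∧ (n : ℝ) * (8 * κ / n) ^ 2 + (m : ℝ) * (8 * κ / m) ^ 2
          ≤ 64 * κ ^ 2 * (1 / n + 1 / m) := by
  refine ⟨fun ℓ x x' y => mmd_diff_x k κ hbd ℓ x x' y, fun ℓ x y y' => ?_, ?_⟩
  · rw [mmdSqHat_comm k hsymm x y, mmdSqHat_comm k hsymm x (Function.update y ℓ y')]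
    exact mmd_diff_x k κ hbd ℓ y y' x
  · have h1 : ∀ p : ℕ, (p : ℝ) * (8 * κ / p) ^ 2 = 64 * κ ^ 2 * (1 / p) := by
      intro p
      rcases Nat.eq_zero_or_pos p with h | h
      · subst h; simp
      · have hp : (0 : ℝ) < p := by exact_mod_cast h
        field_simp
        ring
    rw [h1 n, h1 m, ← mul_add]
end

section
/- Let k(x,y) = ⟨φ(x), φ(y)⟩ for a measurable feature map φ into a separable Hilbert space with ‖φ(x)‖² ≤ κ for all x, and with k ≥ 0. Let h be the MMD U-statistic kernel h(x,x';y,y') = k(x,x') + k(y,y') − k(x,y') − k(x',y), and let X, X' be i.i.d. from p and Y, Y' i.i.d. from q, all independent. Then the first-order variance component σ²_{10} := Var_X( E_{X',Y,Y'}[ h(X,X';Y,Y') ] ) satisfies σ²_{10} ≤ 2κ · MMD²(p,q;k). -/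
open MeasureTheory
open scoped ENNReal NNReal BigOperators RealInnerProductSpace Classical

lemma variance_add_const' {Ω : Type*} [MeasurableSpace Ω] {μ : Measure Ω}
    [IsProbabilityMeasure μ] {g : Ω → ℝ} (hg : MemLp g 2 μ) (c : ℝ) :
    ProbabilityTheory.variance (fun x => g x + c) μ = ProbabilityTheory.variance g μ := by
  have hgc : MemLp (fun x => g x + c) 2 μ := hg.add (memLp_const c)
  rw [ProbabilityTheory.variance_eq_sub hgc, ProbabilityTheory.variance_eq_sub hg]
  have hgi : Integrable g μ := hg.integrable (by norm_num)
  have hg2 : Integrable (fun x => g x ^ 2) μ := hg.integrable_sq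
  have h1 : ((fun x => g x + c) ^ 2) = fun x => g x ^ 2 + (2 * c) * g x + c ^ 2 := by
    funext x; simp [Pi.pow_apply]; ring
  rw [h1]
  rw [integral_add (by exact hg2.add (hgi.const_mul (2*c))) (integrable_const _),
    integral_add hg2 (hgi.const_mul (2*c)), MeasureTheory.integral_const_mul, integral_const,
    integral_add hgi (integrable_const c), integral_const]
  simp [measure_univ]
  ring


/-- First-order variance component bound.
For a nonnegative kernel `k(x,y) = ⟪φ x, φ y⟫` with `‖φ x‖² ≤ κ`, the first-order
variance component `σ²₁₀ = Var_X(E_{X',Y,Y'} h(X,X';Y,Y'))` of the MMD U-statistic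
kernel satisfies `σ²₁₀ ≤ 2κ · MMD²(p,q;k)`. -/
theorem sigma10_variance_bound
    (X H : Type) [MeasurableSpace X]
    [NormedAddCommGroup H] [InnerProductSpace ℝ H] [TopologicalSpace.SeparableSpace H]
    [MeasurableSpace H] [BorelSpace H]
    (φ : X → H) (hφ : Measurable φ) (k : X → X → ℝ) (κ : ℝ)
    (hk : ∀ x y, k x y = ⟪φ x, φ y⟫)
    (hbd : ∀ x, ‖φ x‖ ^ 2 ≤ κ)
    (hpos : ∀ x y, 0 ≤ k x y)
    (p q : Measure X) [IsProbabilityMeasure p] [IsProbabilityMeasure q] :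
    ProbabilityTheory.variance
        (fun x => (∫ x', k x x' ∂p) + (∫ y, ∫ y', k y y' ∂q ∂q)
          - (∫ y', k x y' ∂q) - (∫ x', ∫ y, k x' y ∂q ∂p)) p
      ≤ 2 * κ * mmdSq k p q := by
  haveI : Nonempty X := by
    by_contra h
    rw [not_nonempty_iff] at h
    have h1 : p Set.univ = 1 := measure_univ
    simp [Set.univ_eq_empty_iff.mpr h] at h1
  obtain ⟨x₀⟩ := ‹Nonempty X›
  have hκ0 : 0 ≤ κ := le_trans (sq_nonneg _) (hbd x₀)
  haveI : SecondCountableTopology H := UniformSpace.secondCountable_of_separable H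
  set ψ : X → UniformSpace.Completion H := fun x => (φ x : UniformSpace.Completion H) with hψdef
  have hψsm : StronglyMeasurable ψ :=
    (UniformSpace.Completion.continuous_coe H).comp_stronglyMeasurable hφ.stronglyMeasurable
  have hψnorm : ∀ x, ‖ψ x‖ = ‖φ x‖ := fun x => UniformSpace.Completion.norm_coe (φ x)
  have hk' : ∀ x y, k x y = ⟪ψ x, ψ y⟫ := fun x y => by
    rw [hk, hψdef]; exact (UniformSpace.Completion.inner_coe (𝕜 := ℝ) (φ x) (φ y)).symm
  have hbd' : ∀ x, ‖ψ x‖ ^ 2 ≤ κ := fun x => by rw [hψnorm]; exact hbd x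
  set μp := ∫ x, ψ x ∂p with hμp
  set μq := ∫ y, ψ y ∂q with hμq
  have hbnd : ∀ x, ‖ψ x‖ ≤ Real.sqrt κ := fun x =>
    (Real.le_sqrt (norm_nonneg _) hκ0).mpr (hbd' x)
  have hip : Integrable ψ p :=
    (integrable_const (Real.sqrt κ)).mono' hψsm.aestronglyMeasurable
      (Filter.Eventually.of_forall hbnd)
  have hiq : Integrable ψ q :=
    (integrable_const (Real.sqrt κ)).mono' hψsm.aestronglyMeasurable
      (Filter.Eventually.of_forall hbnd)
  have hA : ∀ x, (∫ x', k x x' ∂p) = ⟪ψ x, μp⟫ := fun x => by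
    simp_rw [hk']; exact integral_inner hip (ψ x)
  have hB : ∀ x, (∫ y, k x y ∂q) = ⟪ψ x, μq⟫ := fun x => by
    simp_rw [hk']; exact integral_inner hiq (ψ x)
  have hA2 : ∀ x, (∫ x', k x x' ∂p) = ⟪μp, ψ x⟫ := fun x =>
    (hA x).trans (real_inner_comm _ _)
  have hB2 : ∀ x, (∫ y, k x y ∂q) = ⟪μq, ψ x⟫ := fun x =>
    (hB x).trans (real_inner_comm _ _)
  have hAA : (∫ x, ∫ x', k x x' ∂p ∂p) = ⟪μp, μp⟫ := by
    simp_rw [hA2]; exact integral_inner hip μp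
  have hC : (∫ y, ∫ y', k y y' ∂q ∂q) = ⟪μq, μq⟫ := by
    simp_rw [hB2]; exact integral_inner hiq μq
  have hD : (∫ x', ∫ y, k x' y ∂q ∂p) = ⟪μp, μq⟫ := by
    simp_rw [hB2]; rw [integral_inner hip μq, real_inner_comm]
  set g : X → ℝ := fun x => ⟪ψ x, μp - μq⟫ with hg
  set c : ℝ := ⟪μq, μq⟫ - ⟪μp, μq⟫ with hc
  have hgb : ∀ x, ‖g x‖ ≤ Real.sqrt κ * ‖μp - μq‖ := fun x => by
    refine le_trans (abs_real_inner_le_norm _ _) ?_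
    exact mul_le_mul_of_nonneg_right (hbnd x) (norm_nonneg _)
  have hgm : AEStronglyMeasurable g p :=
    ((continuous_id.inner (continuous_const (y := μp - μq))).comp_stronglyMeasurable
      hψsm).aestronglyMeasurable
  have hgl2 : MemLp g 2 p := MemLp.of_bound hgm _ (Filter.Eventually.of_forall hgb)
  have hf : (fun x => (∫ x', k x x' ∂p) + (∫ y, ∫ y', k y y' ∂q ∂q)
          - (∫ y', k x y' ∂q) - (∫ x', ∫ y, k x' y ∂q ∂p))
      = fun x => g x + c := by
    funext x
    rw [hA x, hB x, hC, hD, hg, hc]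
    simp only [inner_sub_right]
    ring
  rw [hf, variance_add_const' hgl2]
  have hmmd : mmdSq k p q = ‖μp - μq‖ ^ 2 := by
    unfold mmdSq
    rw [hAA, hC, hD, norm_sub_sq_real, real_inner_self_eq_norm_sq,
      real_inner_self_eq_norm_sq]
    ring
  have h1 : ProbabilityTheory.variance g p ≤ ∫ x, g x ^ 2 ∂p := by
    simpa using ProbabilityTheory.variance_le_expectation_sq hgm
  have h2 : ∫ x, g x ^ 2 ∂p ≤ κ * ‖μp - μq‖ ^ 2 := by
    have hpt : ∀ x, g x ^ 2 ≤ κ * ‖μp - μq‖ ^ 2 := fun x => by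
      have h3 : g x ^ 2 ≤ (Real.sqrt κ * ‖μp - μq‖) ^ 2 := by
        rw [← sq_abs]
        exact pow_le_pow_left₀ (abs_nonneg _) (hgb x) 2
      calc g x ^ 2 ≤ (Real.sqrt κ * ‖μp - μq‖) ^ 2 := h3
        _ = κ * ‖μp - μq‖ ^ 2 := by rw [mul_pow, Real.sq_sqrt hκ0]
    calc ∫ x, g x ^ 2 ∂p ≤ ∫ _x, κ * ‖μp - μq‖ ^ 2 ∂p :=
          integral_mono hgl2.integrable_sq (integrable_const _) hpt
      _ = κ * ‖μp - μq‖ ^ 2 := by simp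
  rw [hmmd]
  nlinarith [sq_nonneg ‖μp - μq‖, h1, h2]
end
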